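/- arXiv:2211.02692 — 2 statements merged into one kernel-verified Lean document; each statement's English description precedes it below -/
import Mathlib

section
/- Let h > 0 and let b_i (i ∈ ℤ) be the degree-1 B-spline (hat function) on the uniform grid {kh : k ∈ ℤ}. Then for all integers i, j one has ∫_ℝ b_j'(t) b_i(t) dt + (h/2) ∫_ℝ b_j'(t) b_i'(t) dt = 1 if j = i, = −1 if j = i − 1, and = 0 in all other cases (in particular the value is 0 whenever j > i). Consequently, for piecewise-linear splines (p_t = 1) on a uniform mesh, the SUPG discretization of the advection problem u' = f with stabilization parameter τ_SUPG = h/2 has a lower triangular (indeed lower bidiagonal) system matrix. -/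
open MeasureTheory

/-- Degree-1 B-spline (hat function) centered at `i*h` on the uniform grid `{k*h : k ∈ ℤ}`. -/
noncomputable def hat (h : ℝ) (i : ℤ) (t : ℝ) : ℝ := max 0 (1 - |t / h - (i : ℝ)|)

/-- Almost-everywhere (piecewise) derivative of the hat function `hat h i`. -/
noncomputable def hatDeriv (h : ℝ) (i : ℤ) (t : ℝ) : ℝ :=
  if ((i : ℝ) - 1) * h < t ∧ t < (i : ℝ) * h then 1 / h
  else if (i : ℝ) * h < t ∧ t < ((i : ℝ) + 1) * h then -(1 / h)
  else 0

/-!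
`hatDeriv h j` is `1/h` times the difference of the indicators of the grid cells
`((j-1)h, jh)` and `(jh, (j+1)h)`, so integrating it against any `g` gives the difference of the
integrals of `g` over these two cells, divided by `h`. On each cell `hat h i` and `hatDeriv h i`
are affine, resp. constant: `hat h i` has integral `h/2` over the two cells of its support, and
`hatDeriv h i` has integral `1`, `-1`, `0` over the cells `i - 1`, `i` and the others. Hence the
Galerkin entry is `1/2` at `j = i + 1` and `-1/2` at `j = i - 1`, the stabilization entry (scaled
by `h/2`) is `1` at `j = i` and `-1/2` at `j = i ± 1`, and the two cancel above the diagonal.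
-/

open Set

def gridCell (h : ℝ) (k : ℤ) : Set ℝ := Ioo ((k : ℝ) * h) ((k + 1) * h)

lemma measurableSet_gridCell (h : ℝ) (k : ℤ) : MeasurableSet (gridCell h k) := measurableSet_Ioo

lemma volume_real_gridCell {h : ℝ} (hh : 0 < h) (k : ℤ) : volume.real (gridCell h k) = h := by
  rw [gridCell, Real.volume_real_Ioo_of_le (by nlinarith)]
  ring

lemma hatDeriv_eq_indicator (h : ℝ) (i : ℤ) (t : ℝ) :
    hatDeriv h i t =
      (1 / h) * ((gridCell h (i - 1)).indicator 1 t - (gridCell h i).indicator 1 t) := by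
  have hpred : ((i - 1 : ℤ) : ℝ) + 1 = i := by push_cast; ring
  simp only [hatDeriv, indicator_apply, gridCell, mem_Ioo, Pi.one_apply, hpred]
  push_cast
  split_ifs <;> first | ring1 | grind

lemma integral_hatDeriv_mul {h : ℝ} {g : ℝ → ℝ} (j : ℤ)
    (hprev : IntegrableOn g (gridCell h (j - 1))) (hself : IntegrableOn g (gridCell h j)) :
    ∫ t, hatDeriv h j t * g t =
      ((∫ t in gridCell h (j - 1), g t) - ∫ t in gridCell h j, g t) / h := by
  have hpt : ∀ t, hatDeriv h j t * g t =
      (1 / h) * ((gridCell h (j - 1)).indicator g t - (gridCell h j).indicator g t) := by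
    classical
    intro t
    simp only [hatDeriv_eq_indicator, indicator_apply, Pi.one_apply]
    split_ifs <;> ring
  simp only [hpt]
  rw [integral_const_mul, integral_sub (hprev.integrable_indicator (measurableSet_gridCell _ _))
      (hself.integrable_indicator (measurableSet_gridCell _ _)),
    integral_indicator (measurableSet_gridCell _ _), integral_indicator (measurableSet_gridCell _ _)]
  ring

section OnGridCell

variable {h t : ℝ} {k : ℤ}

lemma floor_div_of_mem_gridCell (hh : 0 < h) (ht : t ∈ gridCell h k) : ⌊t / h⌋ = k :=
  Int.floor_eq_iff.2 ⟨(le_div_iff₀ hh).2 ht.1.le, (div_lt_iff₀ hh).2 ht.2⟩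

lemma ceil_div_of_mem_gridCell (hh : 0 < h) (ht : t ∈ gridCell h k) : ⌈t / h⌉ = k + 1 :=
  Int.ceil_eq_iff.2 ⟨by push_cast; simpa using (lt_div_iff₀ hh).2 ht.1,
    by push_cast; exact (div_le_iff₀ hh).2 ht.2.le⟩

lemma int_mul_lt_iff_of_mem_gridCell (hh : 0 < h) (ht : t ∈ gridCell h k) (m : ℤ) :
    (m : ℝ) * h < t ↔ m ≤ k := by
  rw [← lt_div_iff₀ hh, ← Int.lt_ceil, ceil_div_of_mem_gridCell hh ht]
  omega

lemma lt_int_mul_iff_of_mem_gridCell (hh : 0 < h) (ht : t ∈ gridCell h k) (m : ℤ) :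
    t < (m : ℝ) * h ↔ k < m := by
  rw [← div_lt_iff₀ hh, ← Int.floor_lt, floor_div_of_mem_gridCell hh ht]

lemma hatDeriv_of_mem_gridCell (hh : 0 < h) (ht : t ∈ gridCell h k) (i : ℤ) :
    hatDeriv h i t = if k = i - 1 then 1 / h else if k = i then -(1 / h) else 0 := by
  have hpred : ((i : ℝ) - 1) = ((i - 1 : ℤ) : ℝ) := by push_cast; ring
  have hsucc : ((i : ℝ) + 1) = ((i + 1 : ℤ) : ℝ) := by push_cast; ring
  simp only [hatDeriv, hpred, hsucc, int_mul_lt_iff_of_mem_gridCell hh ht,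
    lt_int_mul_iff_of_mem_gridCell hh ht]
  split_ifs <;> first | rfl | omega

lemma hat_of_mem_gridCell (hh : 0 < h) (ht : t ∈ gridCell h k) (i : ℤ) :
    hat h i t = if k = i - 1 then t / h - k else if k = i then k + 1 - t / h else 0 := by
  have hlo : (k : ℝ) < t / h := (lt_div_iff₀ hh).2 ht.1
  have hhi : t / h < k + 1 := (div_lt_iff₀ hh).2 ht.2
  unfold hat
  split_ifs with hprev hself
  · have : (i : ℝ) = k + 1 := by rw [hprev]; push_cast; ring
    rw [abs_of_neg (by linarith), max_eq_right (by linarith)]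
    linarith
  · subst hself
    rw [abs_of_pos (by linarith), max_eq_right (by linarith)]
    ring
  · have hfar : 1 ≤ |t / h - i| := by
      rcases lt_or_gt_of_ne hself with hki | hik
      · have : (k : ℝ) + 2 ≤ i := by exact_mod_cast (by omega : k + 2 ≤ i)
        exact le_abs.2 (Or.inr (by linarith))
      · have : (i : ℝ) + 1 ≤ k := by exact_mod_cast hik
        exact le_abs.2 (Or.inl (by linarith))
    exact max_eq_left (by linarith)

end OnGridCell

section IntegralOverGridCell

variable {h : ℝ} (k i : ℤ)

lemma integrableOn_hatDeriv (hh : 0 < h) : IntegrableOn (hatDeriv h i) (gridCell h k) :=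
  (integrableOn_const (by simp [gridCell])).congr_fun
    (fun _ ht => (hatDeriv_of_mem_gridCell hh ht i).symm) (measurableSet_gridCell h k)

lemma setIntegral_gridCell_hatDeriv (hh : 0 < h) :
    ∫ t in gridCell h k, hatDeriv h i t = if k = i - 1 then 1 else if k = i then -1 else 0 := by
  rw [setIntegral_congr_fun (measurableSet_gridCell h k)
      (fun _ ht => hatDeriv_of_mem_gridCell hh ht i), setIntegral_const, volume_real_gridCell hh]
  split_ifs <;> simp [hh.ne']

lemma setIntegral_gridCell_hat (hh : 0 < h) :
    ∫ t in gridCell h k, hat h i t = if k = i - 1 ∨ k = i then h / 2 else 0 := by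
  rw [setIntegral_congr_fun (measurableSet_gridCell h k)
      (fun _ ht => hat_of_mem_gridCell hh ht i), gridCell, ← integral_Ioc_eq_integral_Ioo,
    ← intervalIntegral.integral_of_le (by nlinarith)]
  split_ifs <;> first | tauto | (simp; field_simp; ring) | simp

end IntegralOverGridCell

lemma continuous_hat (h : ℝ) (i : ℤ) : Continuous (hat h i) := by
  unfold hat
  fun_prop

/-- For piecewise-linear splines on a uniform mesh, the SUPG bilinear form with
`τ_SUPG = h/2` applied to hat functions gives a lower bidiagonal matrix:
the `(i,j)` entry is `1` if `j = i`, `-1` if `j = i - 1`, and `0` otherwise. -/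
theorem supg_hat_lower_triangular (h : ℝ) (hh : 0 < h) (i j : ℤ) :
    (∫ t : ℝ, hatDeriv h j t * hat h i t) +
      (h / 2) * (∫ t : ℝ, hatDeriv h j t * hatDeriv h i t) =
    if j = i then 1 else if j = i - 1 then -1 else 0 := by
  have integrableOn_hat (k : ℤ) : IntegrableOn (hat h i) (gridCell h k) :=
    (continuous_hat h i).integrableOn_Icc.mono_set Ioo_subset_Icc_self
  rw [integral_hatDeriv_mul j (integrableOn_hat _) (integrableOn_hat _),
    integral_hatDeriv_mul j (integrableOn_hatDeriv _ i hh) (integrableOn_hatDeriv _ i hh),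
    setIntegral_gridCell_hat _ _ hh, setIntegral_gridCell_hat _ _ hh,
    setIntegral_gridCell_hatDeriv _ _ hh, setIntegral_gridCell_hatDeriv _ _ hh]
  split_ifs <;> first | (exfalso; omega) | (field_simp; ring)
end

section
/- Let h > 0, let n ≥ 2 be an integer and T = n h. Let b_{n−1}(t) = max(0, 1 − |t/h − (n−1)|) be the interior hat function centered at (n−1)h, and let b_n be the right-boundary degree-1 B-spline on [0,T], i.e. b_n(t) = (t − (n−1)h)/h for t ∈ [(n−1)h, T] and b_n(t) = 0 otherwise. Then, with derivatives taken in the a.e. (piecewise) sense, ∫_0^T b_n'(t) b_{n−1}(t) dt + (h/2) ∫_0^T b_n'(t) b_{n−1}'(t) dt = 0, ∫_0^T b_n'(t) b_n(t) dt + (h/2) ∫_0^T (b_n'(t))^2 dt = 1, and ∫_0^T b_{n−1}'(t) b_n(t) dt + (h/2) ∫_0^T b_{n−1}'(t) b_n'(t) dt = −1. Hence the SUPG triangularity with τ_SUPG = h/2 for degree-1 splines also holds in the last row and column, where the basis contains the truncated boundary B-spline. -/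
open MeasureTheory

/-- Right-boundary degree-1 B-spline on `[0, n*h]`:
`b_n(t) = (t - (n-1)h)/h` on `[(n-1)h, nh]` and `0` otherwise. -/
noncomputable def hatR (h : ℝ) (n : ℕ) (t : ℝ) : ℝ :=
  if ((n : ℝ) - 1) * h ≤ t ∧ t ≤ (n : ℝ) * h then (t - ((n : ℝ) - 1) * h) / h else 0

/-- Almost-everywhere (piecewise) derivative of the right-boundary B-spline `hatR h n`. -/
noncomputable def hatRDeriv (h : ℝ) (n : ℕ) (t : ℝ) : ℝ :=
  if ((n : ℝ) - 1) * h < t ∧ t < (n : ℝ) * h then 1 / h else 0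


/-! On the last cell `((n-1)h, nh)` the four functions are affine in the local coordinate
`s = (t - (n-1)h)/h`: `b_{n-1} = 1 - s`, `b_n = s`, `b_{n-1}' = -1/h`, `b_n' = 1/h`, while every
integrand vanishes on `[0, (n-1)h]` because it has `b_n` or `b_n'` as a factor. Each integral is
therefore `h p + h q / 2` for the integrand `p + q s`, and the three identities reduce to
`1/2 - 1/2 = 0`, `1/2 + 1/2 = 1` and `-1/2 - 1/2 = -1`. -/

open Set

theorem intervalIntegral_eq_of_eqOn_zero_of_eqOn_Ioo {E : Type*} [NormedAddCommGroup E]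
    [NormedSpace ℝ E] {f g : ℝ → E} {c a b : ℝ} (hca : c ≤ a) (hab : a ≤ b)
    (hf₀ : EqOn f 0 (Ioc c a)) (hfg : EqOn f g (Ioo a b)) :
    ∫ t in c..b, f t = ∫ t in a..b, g t := by
  have hsub : Ioc a b ⊆ Ioc c b := Ioc_subset_Ioc_left hca
  have hdiff : ∀ t ∈ Ioc c b \ Ioc a b, f t = 0 := fun t ⟨htcb, htab⟩ =>
    hf₀ ⟨htcb.1, not_lt.1 fun hat => htab ⟨hat, htcb.2⟩⟩
  rw [intervalIntegral.integral_of_le (hca.trans hab), intervalIntegral.integral_of_le hab,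
    setIntegral_eq_of_subset_of_forall_sdiff_eq_zero measurableSet_Ioc hsub hdiff,
    integral_Ioc_eq_integral_Ioo, integral_Ioc_eq_integral_Ioo]
  exact setIntegral_congr_fun measurableSet_Ioo hfg

theorem integral_add_mul_sub_div {a h : ℝ} (hh : h ≠ 0) (p q : ℝ) :
    ∫ t in a..a + h, (p + q * ((t - a) / h)) = h * p + q * h / 2 := by
  rw [intervalIntegral.integral_comp_sub_right (fun s => p + q * (s / h)), sub_self,
    add_sub_cancel_left, intervalIntegral.integral_add intervalIntegrable_const
      (((continuous_id'.div_const h).intervalIntegrable 0 h).const_mul q),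
    intervalIntegral.integral_const, intervalIntegral.integral_const_mul,
    intervalIntegral.integral_div, integral_id]
  field_simp
  ring

section

variable {h : ℝ} {n : ℕ} {t : ℝ}

theorem hat_eq_of_mem_Ioo (hh : 0 < h) {i : ℤ} (ht : t ∈ Ioo ((i : ℝ) * h) ((i + 1) * h)) :
    hat h i t = 1 - (t - i * h) / h := by
  have hs : t / h - i = (t - i * h) / h := by field_simp
  have hs₀ : 0 ≤ (t - i * h) / h := div_nonneg (by linarith [ht.1]) hh.le
  have hs₁ : (t - i * h) / h ≤ 1 := (div_le_one hh).2 (by linarith [ht.2])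
  rw [hat, hs, abs_of_nonneg hs₀, max_eq_right (by linarith)]

theorem hatDeriv_eq_of_mem_Ioo {i : ℤ} (ht : t ∈ Ioo ((i : ℝ) * h) ((i + 1) * h)) :
    hatDeriv h i t = -(1 / h) := by
  rw [hatDeriv, if_neg (fun hl => (lt_asymm hl.2 ht.1).elim), if_pos ⟨ht.1, ht.2⟩]

theorem hatR_eq_of_mem_Ioo (ht : t ∈ Ioo (((n : ℝ) - 1) * h) (n * h)) :
    hatR h n t = (t - ((n : ℝ) - 1) * h) / h := by
  rw [hatR, if_pos ⟨ht.1.le, ht.2.le⟩]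

theorem hatR_eq_zero_of_le (ht : t ≤ ((n : ℝ) - 1) * h) : hatR h n t = 0 := by
  rw [hatR]
  split_ifs with hmem
  · rw [le_antisymm ht hmem.1, sub_self, zero_div]
  · rfl

theorem hatRDeriv_eq_of_mem_Ioo (ht : t ∈ Ioo (((n : ℝ) - 1) * h) (n * h)) :
    hatRDeriv h n t = 1 / h := by
  rw [hatRDeriv, if_pos ⟨ht.1, ht.2⟩]

theorem hatRDeriv_eq_zero_of_le (ht : t ≤ ((n : ℝ) - 1) * h) : hatRDeriv h n t = 0 := by
  rw [hatRDeriv, if_neg fun hmem => (not_lt.2 ht hmem.1).elim]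

end

/-- SUPG triangularity with `τ_SUPG = h/2` for degree-1 splines also holds in
the last row and column, where the basis contains the truncated boundary
B-spline `b_n` on `[0, T]` with `T = n*h`. -/
theorem supg_boundary_row_column (h : ℝ) (hh : 0 < h) (n : ℕ) (hn : 2 ≤ n) :
    ((∫ t in (0:ℝ)..((n : ℝ) * h), hatRDeriv h n t * hat h ((n : ℤ) - 1) t) +
        (h / 2) * (∫ t in (0:ℝ)..((n : ℝ) * h),
          hatRDeriv h n t * hatDeriv h ((n : ℤ) - 1) t) = 0) ∧
    ((∫ t in (0:ℝ)..((n : ℝ) * h), hatRDeriv h n t * hatR h n t) +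
        (h / 2) * (∫ t in (0:ℝ)..((n : ℝ) * h), (hatRDeriv h n t) ^ 2) = 1) ∧
    ((∫ t in (0:ℝ)..((n : ℝ) * h), hatDeriv h ((n : ℤ) - 1) t * hatR h n t) +
        (h / 2) * (∫ t in (0:ℝ)..((n : ℝ) * h),
          hatDeriv h ((n : ℤ) - 1) t * hatRDeriv h n t) = -1) := by
  set a := ((n : ℝ) - 1) * h
  have hn₁ : (1 : ℝ) ≤ n := by exact_mod_cast (by omega : 1 ≤ n)
  have ha : 0 ≤ a := mul_nonneg (sub_nonneg.2 hn₁) hh.le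
  have hT : (n : ℝ) * h = a + h := by ring
  have hi : (((n : ℤ) - 1 : ℤ) : ℝ) = n - 1 := by push_cast; ring
  have hcell : ∀ t ∈ Ioo a (n * h),
      t ∈ Ioo ((((n : ℤ) - 1 : ℤ) : ℝ) * h) ((((n : ℤ) - 1 : ℤ) + 1) * h) := fun t ht => by
    rwa [hi, sub_add_cancel]
  have cell : ∀ (f : ℝ → ℝ) (p q : ℝ), EqOn f 0 (Ioc 0 a) →
      (∀ t ∈ Ioo a (n * h), f t = p + q * ((t - a) / h)) →
      ∫ t in (0:ℝ)..(n * h), f t = h * p + q * h / 2 := fun f p q hf₀ hf => by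
    rw [intervalIntegral_eq_of_eqOn_zero_of_eqOn_Ioo ha (by linarith) hf₀ hf, hT,
      integral_add_mul_sub_div hh.ne']
  have hRD₀ : EqOn (hatRDeriv h n) 0 (Ioc 0 a) := fun t ht => hatRDeriv_eq_zero_of_le ht.2
  have hR₀ : EqOn (hatR h n) 0 (Ioc 0 a) := fun t ht => hatR_eq_zero_of_le ht.2
  rw [cell _ (1 / h) (-(1 / h)) (fun t ht => by simp [hRD₀ ht]) fun t ht => by
      rw [hatRDeriv_eq_of_mem_Ioo ht, hat_eq_of_mem_Ioo hh (hcell t ht)]; push_cast; ring,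
    cell _ (-(1 / h ^ 2)) 0 (fun t ht => by simp [hRD₀ ht]) fun t ht => by
      rw [hatRDeriv_eq_of_mem_Ioo ht, hatDeriv_eq_of_mem_Ioo (hcell t ht)]; ring,
    cell _ 0 (1 / h) (fun t ht => by simp [hRD₀ ht]) fun t ht => by
      rw [hatRDeriv_eq_of_mem_Ioo ht, hatR_eq_of_mem_Ioo ht]; ring,
    cell _ (1 / h ^ 2) 0 (fun t ht => by simp [hRD₀ ht]) fun t ht => by
      rw [hatRDeriv_eq_of_mem_Ioo ht]; ring,
    cell _ 0 (-(1 / h)) (fun t ht => by simp [hR₀ ht]) fun t ht => by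
      rw [hatDeriv_eq_of_mem_Ioo (hcell t ht), hatR_eq_of_mem_Ioo ht]; ring,
    cell _ (-(1 / h ^ 2)) 0 (fun t ht => by simp [hRD₀ ht]) fun t ht => by
      rw [hatRDeriv_eq_of_mem_Ioo ht, hatDeriv_eq_of_mem_Ioo (hcell t ht)]; ring]
  refine ⟨?_, ?_, ?_⟩ <;> field_simp <;> ring
end
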